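/- For ν = −1/2 + iM with M → ∞ and σ = l + 1/2 fixed (l ∈ ℕ₀), the quantity √(γ_l/(2α)) · N(ν) · T_ν^{l+1/2}(0) is asymptotic to (−1)^l · (2αM)^{−1/2}, i.e., the ratio tends to 1 as M → ∞. -/

import Mathlib

/-!
At `ν = -1/2 + iM` and `σ = l + 1/2` the Gamma factors reduce to elementary functions.
First, `γ_l = Γ(-iM - l) Γ(iM - l) = |Γ(iM - l)|²` is positive, so the complex square root is a
real one. Second, `Γ(s + 1) = s Γ(s)` gives `|Γ(iM - l - 1)|² = |Γ(iM - l)|² / (M² + (l + 1)²)` and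
`T_ν^{σ+2}(0) = (M² + (l + 1)²) T_ν^σ(0)`, so the ratio `R_l(M)` in the theorem satisfies
`R_{l+2} = R_l · √((M² + (l + 1)²) / (M² + (l + 2)²))`. Third, the reflection formula
`Γ(s) Γ(1 - s) = π / sin(π s)` on the lines `Re s = 0` and `Re s = 1/2` gives
`R_0 = √(tanh(πM/2))` and `R_1 = √(M² / (M² + 1) / tanh(πM/2))`. These and the step factor all
tend to `1`, and two-step induction on `l` finishes the proof.
-/

open Complex Filter Topology ComplexConjugate
open scoped Real

namespace Complex

lemma ne_zero_of_im_ne_zero {s : ℂ} (hs : s.im ≠ 0) : s ≠ 0 := fun h => hs (by simp [h])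

lemma Gamma_ne_zero_of_im_ne_zero {s : ℂ} (hs : s.im ≠ 0) : Gamma s ≠ 0 :=
  Gamma_ne_zero fun m h => hs (by simp [h])

lemma ofReal_sqrt_mul_self {x : ℝ} (hx : 0 ≤ x) : ((√x : ℝ) : ℂ) * (√x : ℝ) = x := by
  rw [← ofReal_mul, Real.mul_self_sqrt hx]

lemma two_cpow_half : (2 : ℂ) ^ (1 / 2 : ℂ) = √2 := by
  rw [Real.sqrt_eq_rpow, ofReal_cpow zero_le_two]
  norm_num

lemma Gamma_conj_mul_Gamma (s : ℂ) : Gamma (conj s) * Gamma s = normSq (Gamma s) := by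
  rw [Gamma_conj, mul_comm, mul_conj]

lemma normSq_Gamma_add_one {s : ℂ} (hs : s ≠ 0) :
    normSq (Gamma (s + 1)) = normSq s * normSq (Gamma s) := by
  rw [Gamma_add_one s hs, map_mul]

lemma Gamma_mul_Gamma_neg {s : ℂ} (hs : s ≠ 0) :
    Gamma s * Gamma (-s) = -π / (s * sin (π * s)) := by
  have h := Gamma_mul_Gamma_one_sub s
  rw [sub_eq_add_neg, add_comm, Gamma_add_one _ (neg_ne_zero.2 hs)] at h
  calc Gamma s * Gamma (-s) = -(Gamma s * (-s * Gamma (-s))) / s := by field_simp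
    _ = -π / (s * sin (π * s)) := by rw [h]; ring

lemma Gamma_one_sub_mul_Gamma_one_add {w : ℂ} (hw : w ≠ 0) :
    Gamma (1 - w) * Gamma (1 + w) = π * w / sin (π * w) := by
  rw [add_comm, Gamma_add_one w hw, mul_left_comm, mul_comm (Gamma (1 - w)),
    Gamma_mul_Gamma_one_sub, mul_div_assoc', mul_comm]

lemma normSq_Gamma_I_mul {y : ℝ} (hy : y ≠ 0) :
    normSq (Gamma (I * y)) = π / (y * Real.sinh (π * y)) := by
  have hy' : (y : ℂ) ≠ 0 := ofReal_ne_zero.2 hy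
  have hsinh : (Real.sinh (π * y) : ℂ) ≠ 0 :=
    ofReal_ne_zero.2 (Real.sinh_ne_zero.2 (mul_ne_zero Real.pi_ne_zero hy))
  apply ofReal_injective
  rw [← Gamma_conj_mul_Gamma, mul_comm, show conj (I * (y : ℂ)) = -(I * y) by simp,
    Gamma_mul_Gamma_neg (mul_ne_zero I_ne_zero hy'),
    show (π : ℂ) * (I * y) = (π * y : ℝ) * I by push_cast; ring, sin_mul_I, ← ofReal_sinh]
  simp only [ofReal_div, ofReal_mul]
  field_simp
  rw [I_sq]

lemma normSq_Gamma_I_mul_sub_succ (l : ℕ) (M : ℝ) :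
    normSq (Gamma (I * M - (l + 1 : ℕ))) =
      normSq (Gamma (I * M - l)) / (M ^ 2 + (l + 1) ^ 2) := by
  have hs : normSq (I * M - (l + 1 : ℕ)) = M ^ 2 + (l + 1) ^ 2 := by
    simp [normSq_apply]
    ring
  have hpos : (0 : ℝ) < M ^ 2 + (l + 1) ^ 2 := by positivity
  rw [show I * (M : ℂ) - l = I * M - (l + 1 : ℕ) + 1 by push_cast; ring,
    normSq_Gamma_add_one (normSq_pos.1 (hs ▸ hpos)), hs]
  field_simp

end Complex

lemma Real.sqrt_div_mul_mul (x : ℝ) {a b : ℝ} (ha : 0 < a) (hb : 0 < b) :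
    √(x / (a * b)) * a = √x * √(a / b) :=
  calc √(x / (a * b)) * a = √(x / (a * b)) * √(a ^ 2) := by rw [Real.sqrt_sq ha.le]
    _ = √(x * (a / b)) := by
      rw [← Real.sqrt_mul' _ (sq_nonneg a)]
      congr 1
      field_simp
    _ = √x * √(a / b) := Real.sqrt_mul' _ (div_nonneg ha.le hb.le)

lemma Real.tendsto_tanh_atTop : Tendsto Real.tanh atTop (𝓝 1) := by
  have h : Tendsto (fun x => Real.exp (-x) ^ 2) atTop (𝓝 0) := by
    simpa using Real.tendsto_exp_neg_atTop_nhds_zero.pow 2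
  have key (x : ℝ) : Real.tanh x = (1 - Real.exp (-x) ^ 2) / (1 + Real.exp (-x) ^ 2) := by
    rw [Real.tanh_eq, Real.exp_neg]
    field_simp
  have := (tendsto_const_nhds (x := (1 : ℝ)).sub h).div (tendsto_const_nhds.add h)
    (by norm_num : (1 : ℝ) + 0 ≠ 0)
  simpa [Pi.div_def, ← key] using this

lemma tendsto_sq_add_div_sq_add (a b : ℝ) :
    Tendsto (fun M : ℝ => (M ^ 2 + a) / (M ^ 2 + b)) atTop (𝓝 1) := by
  have h : Tendsto (fun M : ℝ => (M ^ 2)⁻¹) atTop (𝓝 0) :=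
    tendsto_inv_atTop_zero.comp (tendsto_pow_atTop two_ne_zero)
  have := (tendsto_const_nhds (x := (1 : ℝ)).add (h.const_mul a)).div
    (tendsto_const_nhds.add (h.const_mul b)) (by norm_num : (1 : ℝ) + b * 0 ≠ 0)
  simp only [mul_zero, add_zero, div_one] at this
  refine this.congr' ?_
  filter_upwards [eventually_ne_atTop 0] with M hM
  simp only [Pi.div_apply]
  field_simp

/-- The closed form of `T_ν^σ(0)`. -/
noncomputable def tZero (ν σ : ℂ) : ℂ :=
  ((√π : ℝ) : ℂ) / 2 ^ σ * Gamma (ν + σ + 1)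
    / (Gamma (ν - σ + 1) * Gamma ((σ - ν + 1) / 2) * Gamma ((ν + σ) / 2 + 1))

lemma tZero_add_two {ν σ : ℂ} (h₁ : (ν - σ).im ≠ 0) (h₂ : (ν + σ).im ≠ 0) :
    tZero ν (σ + 2) = -(ν + σ + 1) * (ν - σ) * tZero ν σ := by
  have hc_im : ((σ - ν + 1) / 2).im ≠ 0 := by
    rw [show ((σ - ν + 1) / 2).im = -(ν - σ).im / 2 by simp]
    exact div_ne_zero (neg_ne_zero.2 h₁) two_ne_zero
  have hΓa : Gamma (ν + (σ + 2) + 1) = (ν + σ + 2) * (ν + σ + 1) * Gamma (ν + σ + 1) := by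
    rw [show ν + (σ + 2) + 1 = ν + σ + 1 + 1 + 1 by ring,
      Gamma_add_one _ (ne_zero_of_im_ne_zero (by simpa using h₂)),
      Gamma_add_one _ (ne_zero_of_im_ne_zero (by simpa using h₂))]
    ring
  have hΓb : Gamma (ν - σ + 1) = (ν - σ) * (ν - σ - 1) * Gamma (ν - (σ + 2) + 1) := by
    rw [show ν - σ + 1 = ν - (σ + 2) + 1 + 1 + 1 by ring,
      Gamma_add_one _ (ne_zero_of_im_ne_zero (by simpa using h₁)),
      Gamma_add_one _ (ne_zero_of_im_ne_zero (by simpa using h₁))]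
    ring_nf
  have hΓc : Gamma ((σ + 2 - ν + 1) / 2) = -(ν - σ - 1) / 2 * Gamma ((σ - ν + 1) / 2) := by
    rw [show (σ + 2 - ν + 1) / 2 = (σ - ν + 1) / 2 + 1 by ring,
      Gamma_add_one _ (ne_zero_of_im_ne_zero hc_im)]
    ring
  have hΓd : Gamma ((ν + (σ + 2)) / 2 + 1) = (ν + σ + 2) / 2 * Gamma ((ν + σ) / 2 + 1) := by
    rw [show (ν + (σ + 2)) / 2 + 1 = (ν + σ) / 2 + 1 + 1 by ring,
      Gamma_add_one _ (ne_zero_of_im_ne_zero (by simpa using h₂))]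
    ring
  have h2 : (2 : ℂ) ^ (σ + 2) = 2 ^ σ * 4 := by
    rw [cpow_add _ _ two_ne_zero]
    norm_num
  have := Gamma_ne_zero_of_im_ne_zero (s := ν - (σ + 2) + 1) (by simpa using h₁)
  have := Gamma_ne_zero_of_im_ne_zero hc_im
  have := Gamma_ne_zero_of_im_ne_zero (s := (ν + σ) / 2 + 1) (by simpa using h₂)
  have : ν + σ + 2 ≠ 0 := ne_zero_of_im_ne_zero (by simpa using h₂)
  have : ν - σ ≠ 0 := ne_zero_of_im_ne_zero h₁
  have : ν - σ - 1 ≠ 0 := ne_zero_of_im_ne_zero (by simpa using h₁)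
  unfold tZero
  rw [hΓa, hΓb, hΓc, hΓd, h2]
  field_simp
  ring

lemma tZero_half {M : ℝ} (hM : M ≠ 0) :
    tZero (-1 / 2 + I * M) (1 / 2) = I * (√2 * Real.sinh (π * M / 2) / √π : ℝ) := by
  have hIM : I * (M : ℂ) ≠ 0 := mul_ne_zero I_ne_zero (ofReal_ne_zero.2 hM)
  have hsin : sin (π * (I * M / 2)) = Real.sinh (π * M / 2) * I := by
    rw [show (π : ℂ) * (I * M / 2) = (π * M / 2 : ℝ) * I by push_cast; ring, sin_mul_I,
      ofReal_sinh]
  unfold tZero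
  rw [show -1 / 2 + I * M + 1 / 2 + 1 = I * M + 1 by ring,
    show -1 / 2 + I * M - 1 / 2 + 1 = I * M by ring,
    show (1 / 2 - (-1 / 2 + I * M) + 1) / 2 = 1 - I * M / 2 by ring,
    show (-1 / 2 + I * M + 1 / 2) / 2 + 1 = 1 + I * M / 2 by ring,
    mul_assoc (Gamma (I * M)), Gamma_one_sub_mul_Gamma_one_add (div_ne_zero hIM two_ne_zero),
    Gamma_add_one _ hIM, two_cpow_half, hsin]
  have := Gamma_ne_zero_of_im_ne_zero (s := I * M) (by simpa using hM)
  have : ((√π : ℝ) : ℂ) ≠ 0 := ofReal_ne_zero.2 (Real.sqrt_ne_zero'.2 Real.pi_pos)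
  have : ((√2 : ℝ) : ℂ) ≠ 0 := ofReal_ne_zero.2 (Real.sqrt_ne_zero'.2 two_pos)
  have : (Real.sinh (π * M / 2) : ℂ) ≠ 0 :=
    ofReal_ne_zero.2 (Real.sinh_ne_zero.2 (by positivity))
  have : (M : ℂ) ≠ 0 := ofReal_ne_zero.2 hM
  have h2sq : ((√2 : ℝ) : ℂ) * (√2 : ℝ) = 2 := by simpa using ofReal_sqrt_mul_self zero_le_two
  simp only [ofReal_mul, ofReal_div]
  field_simp
  linear_combination 2 * ofReal_sqrt_mul_self Real.pi_pos.le - (π : ℂ) * h2sq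

lemma tZero_three_halves {M : ℝ} (hM : M ≠ 0) :
    tZero (-1 / 2 + I * M) (3 / 2) = -I * (√2 * M * Real.cosh (π * M / 2) / √π : ℝ) := by
  set u : ℂ := (1 + I * M) / 2 with hu
  have hu₀ : u ≠ 0 := fun h => by simpa [hu] using congrArg re h
  have hu₁ : 1 - u ≠ 0 := fun h => by
    have := congrArg re h
    norm_num [hu] at this
  have hsin : sin (π * u) = Real.cosh (π * M / 2) := by
    rw [show (π : ℂ) * u = (π * M / 2 : ℝ) * I + π / 2 by rw [hu]; push_cast; ring,
      sin_add_pi_div_two, cos_mul_I, ofReal_cosh]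
  have h2 : (2 : ℂ) ^ (3 / 2 : ℂ) = 2 * √2 := by
    rw [show (3 / 2 : ℂ) = 1 + 1 / 2 by norm_num, cpow_add _ _ two_ne_zero, cpow_one,
      two_cpow_half]
  have hΓ : Gamma (I * M + 2) = (I * M + 1) * (I * M) * (I * M - 1) * Gamma (I * M - 1) := by
    rw [show I * (M : ℂ) + 2 = I * M - 1 + 1 + 1 + 1 by ring,
      Gamma_add_one _ (ne_zero_of_im_ne_zero (by simpa using hM)),
      Gamma_add_one _ (ne_zero_of_im_ne_zero (by simpa using hM)),
      Gamma_add_one _ (ne_zero_of_im_ne_zero (by simpa using hM))]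
    ring
  unfold tZero
  rw [show -1 / 2 + I * M + 3 / 2 + 1 = I * M + 2 by ring,
    show -1 / 2 + I * M - 3 / 2 + 1 = I * M - 1 by ring,
    show (3 / 2 - (-1 / 2 + I * M) + 1) / 2 = 1 - u + 1 by rw [hu]; ring,
    show (-1 / 2 + I * M + 3 / 2) / 2 + 1 = 1 + u by rw [hu]; ring,
    Gamma_add_one _ hu₁, mul_assoc (Gamma (I * M - 1)), mul_assoc,
    Gamma_one_sub_mul_Gamma_one_add hu₀, hΓ, h2, hsin]
  have := Gamma_ne_zero_of_im_ne_zero (s := I * M - 1) (by simpa using hM)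
  have : ((√π : ℝ) : ℂ) ≠ 0 := ofReal_ne_zero.2 (Real.sqrt_ne_zero'.2 Real.pi_pos)
  have : ((√2 : ℝ) : ℂ) ≠ 0 := ofReal_ne_zero.2 (Real.sqrt_ne_zero'.2 two_pos)
  have : (Real.cosh (π * M / 2) : ℂ) ≠ 0 := ofReal_ne_zero.2 (Real.cosh_pos _).ne'
  have : (M : ℂ) ≠ 0 := ofReal_ne_zero.2 hM
  have h2sq : ((√2 : ℝ) : ℂ) * (√2 : ℝ) = 2 := by simpa using ofReal_sqrt_mul_self zero_le_two
  simp only [ofReal_mul, ofReal_div]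
  field_simp
  rw [hu]
  linear_combination ((I * M) ^ 2 - 1) * ofReal_sqrt_mul_self Real.pi_pos.le
    + ((1 + I * M) * (1 - I * M) / 2 * π) * h2sq

/-- The ratio in `stmt16` at `ν = -1/2 + iM`, with `γ_l = |Γ(iM - l)|²` and the powers of `α`
cancelled. -/
noncomputable def leadingRatio (l : ℕ) (M : ℝ) : ℂ :=
  (√(M * normSq (Gamma (I * M - l))) : ℝ) *
    ((-1) ^ l * (-I) * tZero (-1 / 2 + I * M) (l + 1 / 2))

lemma leadingRatio_add_two (l : ℕ) {M : ℝ} (hM : M ≠ 0) :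
    leadingRatio (l + 2) M =
      leadingRatio l M * (√((M ^ 2 + (l + 1) ^ 2) / (M ^ 2 + (l + 2) ^ 2)) : ℝ) := by
  have hT : tZero (-1 / 2 + I * M) ((l + 2 : ℕ) + 1 / 2) =
      (M ^ 2 + (l + 1) ^ 2 : ℝ) * tZero (-1 / 2 + I * M) (l + 1 / 2) := by
    rw [show ((l + 2 : ℕ) : ℂ) + 1 / 2 = l + 1 / 2 + 2 by push_cast; ring,
      tZero_add_two (by simpa using hM) (by simpa using hM)]
    push_cast
    linear_combination (-(M : ℂ) ^ 2 * tZero (-1 / 2 + I * M) (l + 1 / 2)) * I_sq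
  have hg : M * normSq (Gamma (I * M - (l + 2 : ℕ))) =
      M * normSq (Gamma (I * M - l)) / ((M ^ 2 + (l + 1) ^ 2) * (M ^ 2 + (l + 2) ^ 2)) := by
    rw [normSq_Gamma_I_mul_sub_succ (l + 1), normSq_Gamma_I_mul_sub_succ l, mul_div_assoc',
      mul_div_assoc', div_div]
    push_cast
    ring_nf
  have hsqrt := congrArg ofReal <| Real.sqrt_div_mul_mul (M * normSq (Gamma (I * M - l)))
    (a := M ^ 2 + (l + 1) ^ 2) (b := M ^ 2 + (l + 2) ^ 2) (by positivity) (by positivity)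
  push_cast at hsqrt
  unfold leadingRatio
  rw [hT, hg]
  push_cast
  linear_combination ((-1) ^ l * -I * tZero (-1 / 2 + I * M) (l + 1 / 2)) * hsqrt

lemma leadingRatio_zero {M : ℝ} (hM : 0 < M) :
    leadingRatio 0 M = (√(Real.tanh (π * M / 2)) : ℝ) := by
  have : 0 < Real.sinh (π * M / 2) := Real.sinh_pos_iff.2 (by positivity)
  have hsq : M * (π / (M * Real.sinh (π * M))) * (√2 * Real.sinh (π * M / 2) / √π) ^ 2 =
      Real.tanh (π * M / 2) := by
    rw [div_pow, mul_pow, Real.sq_sqrt zero_le_two, Real.sq_sqrt Real.pi_pos.le,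
      show π * M = 2 * (π * M / 2) by ring, Real.sinh_two_mul, Real.tanh_eq_sinh_div_cosh]
    field_simp
  unfold leadingRatio
  rw [Nat.cast_zero, sub_zero, zero_add, pow_zero, one_mul, tZero_half hM.ne',
    normSq_Gamma_I_mul hM.ne', ← hsq, Real.sqrt_mul' _ (sq_nonneg _),
    Real.sqrt_sq (by positivity), ofReal_mul]
  linear_combination -((√(M * (π / (M * Real.sinh (π * M)))) : ℝ) : ℂ) *
    ((√2 * Real.sinh (π * M / 2) / √π : ℝ) : ℂ) * I_sq

lemma leadingRatio_one {M : ℝ} (hM : 0 < M) :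
    leadingRatio 1 M = (√(M ^ 2 / (M ^ 2 + 1) / Real.tanh (π * M / 2)) : ℝ) := by
  have : 0 < Real.sinh (π * M / 2) := Real.sinh_pos_iff.2 (by positivity)
  have hsq : M * (π / (M * Real.sinh (π * M)) / (M ^ 2 + 1)) *
      (√2 * M * Real.cosh (π * M / 2) / √π) ^ 2 = M ^ 2 / (M ^ 2 + 1) / Real.tanh (π * M / 2) := by
    rw [div_pow, mul_pow, mul_pow, Real.sq_sqrt zero_le_two, Real.sq_sqrt Real.pi_pos.le,
      show π * M = 2 * (π * M / 2) by ring, Real.sinh_two_mul, Real.tanh_eq_sinh_div_cosh]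
    field_simp
  have hΓ : normSq (Gamma (I * M - 1)) = normSq (Gamma (I * M)) / (M ^ 2 + 1) := by
    simpa using normSq_Gamma_I_mul_sub_succ 0 M
  unfold leadingRatio
  rw [Nat.cast_one, pow_one, show (1 : ℂ) + 1 / 2 = 3 / 2 by norm_num,
    tZero_three_halves hM.ne', hΓ, normSq_Gamma_I_mul hM.ne', ← hsq,
    Real.sqrt_mul' _ (sq_nonneg _), Real.sqrt_sq (by positivity), ofReal_mul]
  linear_combination -((√(M * (π / (M * Real.sinh (π * M)) / (M ^ 2 + 1))) : ℝ) : ℂ) *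
    ((√2 * M * Real.cosh (π * M / 2) / √π : ℝ) : ℂ) * I_sq

lemma tendsto_leadingRatio (l : ℕ) : Tendsto (leadingRatio l) atTop (𝓝 1) := by
  have hcast {f : ℝ → ℝ} (hf : Tendsto f atTop (𝓝 1)) :
      Tendsto (fun M => ((√(f M) : ℝ) : ℂ)) atTop (𝓝 1) := by
    have := ((continuous_ofReal.comp Real.continuous_sqrt).tendsto 1).comp hf
    simpa [Function.comp_def] using this
  have htanh : Tendsto (fun M : ℝ => Real.tanh (π * M / 2)) atTop (𝓝 1) :=
    Real.tendsto_tanh_atTop.comp <|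
      (tendsto_id.const_mul_atTop Real.pi_pos).atTop_div_const two_pos
  induction l using Nat.twoStepInduction with
  | zero =>
    refine (hcast htanh).congr' ?_
    filter_upwards [eventually_gt_atTop 0] with M hM
    rw [leadingRatio_zero hM]
  | one =>
    have h : Tendsto (fun M : ℝ => M ^ 2 / (M ^ 2 + 1) / Real.tanh (π * M / 2)) atTop (𝓝 1) := by
      simpa [Pi.div_def] using (tendsto_sq_add_div_sq_add 0 1).div htanh one_ne_zero
    refine (hcast h).congr' ?_
    filter_upwards [eventually_gt_atTop 0] with M hM
    rw [leadingRatio_one hM]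
  | more l ih _ =>
    have h := ih.mul (hcast (tendsto_sq_add_div_sq_add ((l + 1) ^ 2) ((l + 2) ^ 2)))
    rw [mul_one] at h
    refine h.congr' ?_
    filter_upwards [eventually_gt_atTop 0] with M hM
    rw [leadingRatio_add_two l hM.ne']

lemma cpow_half_mul_div_rpow_neg_half {α M g : ℝ} (hα : 0 < α) (hM : 0 < M) (hg : 0 ≤ g)
    (l : ℕ) (z : ℂ) :
    ((g / (2 * α : ℂ)) ^ ((1 : ℂ) / 2) * (-I) * z) /
        ((-1) ^ l * (((2 * α * M) ^ (-(1 / 2) : ℝ) : ℝ) : ℂ)) =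
      (√(M * g) : ℝ) * ((-1) ^ l * (-I) * z) := by
  have hcpow : (g / (2 * α : ℂ)) ^ ((1 : ℂ) / 2) = (√(g / (2 * α)) : ℝ) := by
    rw [Real.sqrt_eq_rpow, ofReal_cpow (by positivity)]
    push_cast
    ring_nf
  have hrpow : (2 * α * M) ^ (-(1 / 2) : ℝ) = (√(2 * α * M))⁻¹ := by
    rw [Real.rpow_neg (by positivity), Real.sqrt_eq_rpow, one_div]
  have hsqrt : √(g / (2 * α)) * √(2 * α * M) = √(M * g) := by
    rw [← Real.sqrt_mul (by positivity)]
    congr 1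
    field_simp
  have hsign : ((-1 : ℂ) ^ l) ^ 2 = 1 := by
    rw [← pow_mul, mul_comm, pow_mul]
    norm_num
  have hpos : ((√(2 * α * M) : ℝ) : ℂ) ≠ 0 := ofReal_ne_zero.2 (by positivity)
  rw [hcpow, hrpow, ← hsqrt, ofReal_inv, ofReal_mul,
    div_eq_iff (mul_ne_zero (pow_ne_zero _ (by norm_num)) (inv_ne_zero hpos))]
  field_simp
  rw [hsign, mul_one]

/-- In the large mass limit (ν = −1/2 + iM, M → +∞), with
γ_l = Γ(−ν−l−1/2)Γ(ν−l+1/2), N(ν) = −i and T_ν^{l+1/2}(0) given by its closed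
Gamma-function formula, one has
√(γ_l/(2α))·N(ν)·T_ν^{l+1/2}(0) ≃ (−1)^l (2αM)^{−1/2}, i.e. the ratio → 1. -/
theorem stmt16 (α : ℝ) (hα : 0 < α) (l : ℕ)
    (ν : ℝ → ℂ) (hν : ∀ M : ℝ, ν M = -1/2 + Complex.I * (M:ℂ))
    (γ : ℝ → ℂ)
    (hγ : ∀ M : ℝ, γ M = Complex.Gamma (-(ν M) - (l:ℂ) - 1/2)
        * Complex.Gamma (ν M - (l:ℂ) + 1/2))
    (T0 : ℝ → ℂ)
    (hT0 : ∀ M : ℝ, T0 M = ((Real.sqrt Real.pi : ℝ) : ℂ) / 2 ^ ((l:ℂ) + 1/2)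
        * Complex.Gamma (ν M + ((l:ℂ) + 1/2) + 1)
        / (Complex.Gamma (ν M - ((l:ℂ) + 1/2) + 1)
            * Complex.Gamma ((((l:ℂ) + 1/2) - ν M + 1)/2)
            * Complex.Gamma ((ν M + ((l:ℂ) + 1/2))/2 + 1))) :
    Filter.Tendsto
      (fun M : ℝ =>
        ((γ M / (2*(α:ℂ))) ^ ((1:ℂ)/2) * (-Complex.I) * T0 M)
          / ((-1 : ℂ)^l * (((2*α*M) ^ (-(1/2) : ℝ) : ℝ) : ℂ)))
      Filter.atTop (nhds 1) := by
  have hγ' (M : ℝ) : γ M = normSq (Gamma (I * M - l)) := by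
    have hconj : conj (I * M - l) = -(-1 / 2 + I * M) - l - 1 / 2 := by
      simp
      ring
    rw [hγ, hν, ← hconj, show -1 / 2 + I * M - l + 1 / 2 = I * M - l by ring,
      Gamma_conj_mul_Gamma]
  have hT0' (M : ℝ) : T0 M = tZero (-1 / 2 + I * M) (l + 1 / 2) := hν M ▸ hT0 M
  refine (tendsto_leadingRatio l).congr' ?_
  filter_upwards [eventually_gt_atTop 0] with M hM
  rw [hγ', hT0', cpow_half_mul_div_rpow_neg_half hα hM (normSq_nonneg _), leadingRatio]
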